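/- Let A₁ and A₂ be real n×n symmetric matrices, and let λᵢ(M) denote the i-th smallest eigenvalue of a symmetric matrix M. Then for each 1 ≤ i ≤ n and each 1 ≤ j ≤ i, one has λᵢ(A₁+A₂) ≥ λ_{i−j+1}(A₁) + λⱼ(A₂). -/

import Mathlib

/-!
The span `U` of the eigenvectors of `A₁ + A₂` for its `i` smallest eigenvalues, the span `V` of
the eigenvectors of `A₁` for its eigenvalues from the `(i - j + 1)`-th on, and the span `W` of
those of `A₂` from the `j`-th on have dimensions `i`, `n - i + j` and `n - j + 1`. These add up to
`2n + 1`, so the three subspaces share a nonzero vector `x`. Expanding `x` in the eigenbases,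
`⟪(A₁ + A₂) x, x⟫ ≤ λᵢ(A₁ + A₂) ‖x‖²` because `x ∈ U`, while `⟪A₁ x, x⟫ ≥ λ_{i-j+1}(A₁) ‖x‖²`
and `⟪A₂ x, x⟫ ≥ λⱼ(A₂) ‖x‖²` because `x ∈ V` and `x ∈ W`.
-/

/-- The eigenvalues of a Hermitian matrix, sorted in ascending order. -/
noncomputable def sortedEig {n : ℕ} {A : Matrix (Fin n) (Fin n) ℝ}
    (hA : A.IsHermitian) : Fin n → ℝ :=
  hA.eigenvalues ∘ Tuple.sort hA.eigenvalues

open RealInnerProductSpace Module Submodule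

section EigenbasisBounds

variable {ι E : Type*} [Fintype ι] [NormedAddCommGroup E] [InnerProductSpace ℝ E]
  {T : E →ₗ[ℝ] E} {b : OrthonormalBasis ι ℝ E} {μ : ι → ℝ}

theorem OrthonormalBasis.inner_apply_self_eq_sum_of_eigen (hb : ∀ k, T (b k) = μ k • b k)
    (x : E) : ⟪T x, x⟫ = ∑ k, μ k * ⟪b k, x⟫ ^ 2 := by
  calc ⟪T x, x⟫ = ⟪T (∑ k, ⟪b k, x⟫ • b k), x⟫ := by rw [b.sum_repr']
    _ = ∑ k, μ k * ⟪b k, x⟫ ^ 2 := by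
      simp only [map_sum, map_smul, hb, sum_inner, real_inner_smul_left]
      exact Finset.sum_congr rfl fun k _ => by ring

theorem OrthonormalBasis.inner_eq_zero_of_mem_span_image {S : Set ι} {x : E}
    (hx : x ∈ span ℝ (b '' S)) {k : ι} (hk : k ∉ S) : ⟪b k, x⟫ = 0 := by
  rw [← b.coe_toBasis, Basis.mem_span_image] at hx
  rw [← b.repr_apply_apply, ← b.coe_toBasis_repr_apply]
  exact Finsupp.notMem_support_iff.mp fun h => hk (hx h)

theorem OrthonormalBasis.mul_norm_sq_le_inner_apply_self (hb : ∀ k, T (b k) = μ k • b k)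
    {S : Set ι} {c : ℝ} (hc : ∀ k ∈ S, c ≤ μ k) {x : E} (hx : x ∈ span ℝ (b '' S)) :
    c * ‖x‖ ^ 2 ≤ ⟪T x, x⟫ := by
  rw [b.inner_apply_self_eq_sum_of_eigen hb, ← b.sum_sq_inner_right, Finset.mul_sum]
  refine Finset.sum_le_sum fun k _ => ?_
  by_cases hk : k ∈ S
  · exact mul_le_mul_of_nonneg_right (hc k hk) (sq_nonneg _)
  · simp [b.inner_eq_zero_of_mem_span_image hx hk]

theorem OrthonormalBasis.inner_apply_self_le_mul_norm_sq (hb : ∀ k, T (b k) = μ k • b k)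
    {S : Set ι} {c : ℝ} (hc : ∀ k ∈ S, μ k ≤ c) {x : E} (hx : x ∈ span ℝ (b '' S)) :
    ⟪T x, x⟫ ≤ c * ‖x‖ ^ 2 := by
  have hneg := b.mul_norm_sq_le_inner_apply_self (T := -T) (μ := -μ) (c := -c)
    (fun k => by simp [hb, neg_smul]) (fun k hk => neg_le_neg (hc k hk)) hx
  simpa [inner_neg_left] using hneg

end EigenbasisBounds

theorem LinearIndependent.finrank_span_image_finset {ι K V : Type*} [DivisionRing K]
    [AddCommGroup V] [Module K V] {v : ι → V} (hv : LinearIndependent K v) (s : Finset ι) :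
    finrank K (span K (v '' s)) = s.card := by
  rw [Set.image_eq_range]
  exact (finrank_span_eq_card (hv.comp _ Subtype.val_injective)).trans (by simp)

section Intersections

variable {K V : Type*} [DivisionRing K] [AddCommGroup V] [Module K V] [FiniteDimensional K V]

theorem Submodule.finrank_add_finrank_le_finrank_add_finrank_inf (U W : Submodule K V) :
    finrank K U + finrank K W ≤ finrank K V + finrank K ↥(U ⊓ W) := by
  rw [← finrank_sup_add_finrank_inf_eq]
  exact Nat.add_le_add_right (finrank_le _) _

theorem Submodule.exists_ne_zero_mem_inf_inf {U W X : Submodule K V}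
    (h : 2 * finrank K V < finrank K U + finrank K W + finrank K X) :
    ∃ x ≠ 0, x ∈ U ∧ x ∈ W ∧ x ∈ X := by
  have hUW := finrank_add_finrank_le_finrank_add_finrank_inf U W
  have hUWX := finrank_add_finrank_le_finrank_add_finrank_inf (U ⊓ W) X
  obtain ⟨x, hx0⟩ :=
    (finrank_pos_iff_exists_ne_zero (R := K) (M := ↥(U ⊓ W ⊓ X))).mp (by omega)
  exact ⟨x, by simpa using hx0, x.2.1.1, x.2.1.2, x.2.2⟩

end Intersections

namespace Matrix.IsHermitian

variable {n : ℕ} {A : Matrix (Fin n) (Fin n) ℝ} (hA : A.IsHermitian)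

noncomputable def sortedEigenvectorBasis :
    OrthonormalBasis (Fin n) ℝ (EuclideanSpace ℝ (Fin n)) :=
  hA.eigenvectorBasis.reindex (Tuple.sort hA.eigenvalues).symm

theorem toEuclideanLin_sortedEigenvectorBasis (k : Fin n) :
    toEuclideanLin A (hA.sortedEigenvectorBasis k) =
      sortedEig hA k • hA.sortedEigenvectorBasis k := by
  rw [sortedEigenvectorBasis, OrthonormalBasis.reindex_apply, Equiv.symm_symm]
  exact WithLp.ofLp_injective 2 (hA.mulVec_eigenvectorBasis _)

theorem finrank_span_sortedEigenvectorBasis_Iic (k : Fin n) :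
    finrank ℝ (span ℝ (hA.sortedEigenvectorBasis '' Set.Iic k)) = k + 1 := by
  rw [← Finset.coe_Iic,
    hA.sortedEigenvectorBasis.orthonormal.linearIndependent.finrank_span_image_finset, Fin.card_Iic]

theorem finrank_span_sortedEigenvectorBasis_Ici (k : Fin n) :
    finrank ℝ (span ℝ (hA.sortedEigenvectorBasis '' Set.Ici k)) = n - k := by
  rw [← Finset.coe_Ici,
    hA.sortedEigenvectorBasis.orthonormal.linearIndependent.finrank_span_image_finset, Fin.card_Ici]

theorem sortedEig_mul_norm_sq_le {k : Fin n} {x : EuclideanSpace ℝ (Fin n)}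
    (hx : x ∈ span ℝ (hA.sortedEigenvectorBasis '' Set.Ici k)) :
    sortedEig hA k * ‖x‖ ^ 2 ≤ ⟪toEuclideanLin A x, x⟫ :=
  OrthonormalBasis.mul_norm_sq_le_inner_apply_self hA.toEuclideanLin_sortedEigenvectorBasis
    (fun _ hm => Tuple.monotone_sort _ hm) hx

theorem inner_le_sortedEig_mul_norm_sq {k : Fin n} {x : EuclideanSpace ℝ (Fin n)}
    (hx : x ∈ span ℝ (hA.sortedEigenvectorBasis '' Set.Iic k)) :
    ⟪toEuclideanLin A x, x⟫ ≤ sortedEig hA k * ‖x‖ ^ 2 :=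
  OrthonormalBasis.inner_apply_self_le_mul_norm_sq hA.toEuclideanLin_sortedEigenvectorBasis
    (fun _ hm => Tuple.monotone_sort _ hm) hx

end Matrix.IsHermitian

/-- Weyl's inequality (lower bound form): for real symmetric matrices `A₁`, `A₂`,
`λᵢ(A₁+A₂) ≥ λ_{i−j+1}(A₁) + λⱼ(A₂)` for `1 ≤ i ≤ n`, `1 ≤ j ≤ i`
(1-based indexing, eigenvalues in ascending order). -/
theorem weyl_lower {n : ℕ} (A₁ A₂ : Matrix (Fin n) (Fin n) ℝ)
    (h₁ : A₁.IsHermitian) (h₂ : A₂.IsHermitian)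
    (i j : ℕ) (hi1 : 1 ≤ i) (hin : i ≤ n) (hj1 : 1 ≤ j) (hji : j ≤ i) :
    sortedEig h₁ ⟨i - j + 1 - 1, by omega⟩ + sortedEig h₂ ⟨j - 1, by omega⟩ ≤
      sortedEig (h₁.add h₂) ⟨i - 1, by omega⟩ := by
  obtain ⟨x, hx_ne, hx₀, hx₁, hx₂⟩ := Submodule.exists_ne_zero_mem_inf_inf
    (U := span ℝ ((h₁.add h₂).sortedEigenvectorBasis '' Set.Iic ⟨i - 1, by omega⟩))
    (W := span ℝ (h₁.sortedEigenvectorBasis '' Set.Ici ⟨i - j + 1 - 1, by omega⟩))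
    (X := span ℝ (h₂.sortedEigenvectorBasis '' Set.Ici ⟨j - 1, by omega⟩))
    (by
      simp only [Matrix.IsHermitian.finrank_span_sortedEigenvectorBasis_Iic,
        Matrix.IsHermitian.finrank_span_sortedEigenvectorBasis_Ici, finrank_euclideanSpace_fin]
      omega)
  have hsum := (h₁.add h₂).inner_le_sortedEig_mul_norm_sq hx₀
  rw [map_add, LinearMap.add_apply, inner_add_left] at hsum
  have hx_pos : 0 < ‖x‖ ^ 2 := by positivity
  have hA₁ := h₁.sortedEig_mul_norm_sq_le hx₁
  have hA₂ := h₂.sortedEig_mul_norm_sq_le hx₂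
  exact le_of_mul_le_mul_right (by linarith) hx_pos
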